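/- The dendriform multiplication on tree names satisfies cancellation: v̄ ⋉ ū = v̄ ⋉ w̄ implies ū = w̄ (for ū, w̄ of equal degree), and ū ⋉ v̄ = w̄ ⋉ v̄ implies ū = w̄. -/

import Mathlib

/-- Planar rooted binary trees. -/
inductive PB : Type
  | leaf : PB
  | node : PB → PB → PB
  deriving DecidableEq

namespace PB

/-- The name (vector encoding) of a planar binary tree. -/
def name : PB → List ℕ
  | leaf => []
  | node l r => name l ++ [1] ++ (name r).map (fun x => x + (name l).length + 1)

/-- Number of internal (trivalent) vertices. -/
def nodes : PB → ℕ
  | leaf => 0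
  | node l r => nodes l + nodes r + 1

/-- Mirror image of a tree. -/
def mirror : PB → PB
  | leaf => leaf
  | node l r => node (mirror r) (mirror l)

/-- Left subtree. -/
def left : PB → PB
  | leaf => leaf
  | node l _ => l

/-- Right subtree. -/
def right : PB → PB
  | leaf => leaf
  | node _ r => r

end PB

/-- Grafting on vectors: v ∨ w = (v, 1, w + (len v + 1)). -/
def graft (v w : List ℕ) : List ℕ := v ++ [1] ++ w.map (fun x => x + v.length + 1)

/-- A list is a tree name if it is the name of some planar binary tree. -/
def TreeName (v : List ℕ) : Prop := ∃ t : PB, PB.name t = v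

/-- Componentwise order on vectors (of the same length). -/
def vle (v w : List ℕ) : Prop := List.Forall₂ (· ≤ ·) v w

/-- Strict componentwise order. -/
def vlt (v w : List ℕ) : Prop := vle v w ∧ v ≠ w

/-- k ▷ w : shift all coordinates ≠ 1 by k, fix coordinates equal to 1. -/
def rsh (k : ℕ) (w : List ℕ) : List ℕ := w.map (fun x => if x = 1 then 1 else x + k)

/-- The over operation on tree names: v ↗ w = (v, len v ▷ w). -/
def overV (v w : List ℕ) : List ℕ := v ++ rsh v.length w

/-- The under operation on tree names: v ↖ w = (v, len v + w). -/
def under (v w : List ℕ) : List ℕ := v ++ w.map (fun x => x + v.length)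

/-- Componentwise interval of lists. -/
def listIcc : List ℕ → List ℕ → Finset (List ℕ)
  | a :: as, b :: bs => ((Finset.Icc a b) ×ˢ listIcc as bs).image fun p => p.1 :: p.2
  | _, _ => {[]}

open Classical in
/-- Componentwise interval of tree names. -/
noncomputable def treeIcc (a b : List ℕ) : Finset (List ℕ) :=
  (listIcc a b).filter TreeName

/-- Dendriform addition of tree names: all tree names t with v ↗ w ≤ t ≤ v ↖ w. -/
noncomputable def dplus (v w : List ℕ) : Finset (List ℕ) :=
  treeIcc (overV v w) (under v w)

open Classical in
/-- The tree with a given name. -/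
noncomputable def treeOf (v : List ℕ) : PB :=
  if h : ∃ t : PB, PB.name t = v then h.choose else PB.leaf

/-- The dendriform involution on tree names (mirror image of the tree). -/
noncomputable def dag (v : List ℕ) : List ℕ := PB.name (PB.mirror (treeOf v))

/-- The name of the left subtree of (the tree of) a name. -/
noncomputable def leftN (v : List ℕ) : List ℕ := PB.name (treeOf v).left

/-- The name of the right subtree of (the tree of) a name. -/
noncomputable def rightN (v : List ℕ) : List ℕ := PB.name (treeOf v).right

/-- Left dendriform operation v ⊣ w := v_l ∨ (v_r ∔ w). -/
noncomputable def dashv (v w : List ℕ) : Finset (List ℕ) :=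
  (dplus (rightN v) w).image (graft (leftN v))

/-- Right dendriform operation v ⊢ w := (v ∔ w_l) ∨ w_r. -/
noncomputable def vdash (v w : List ℕ) : Finset (List ℕ) :=
  (dplus v (leftN w)).image (fun u => graft u (rightN w))

/-- Extension of ⊣ to groves by union. -/
noncomputable def dashvG (G H : Finset (List ℕ)) : Finset (List ℕ) :=
  G.biUnion fun a => H.biUnion fun b => dashv a b

/-- Extension of ⊢ to groves by union. -/
noncomputable def vdashG (G H : Finset (List ℕ)) : Finset (List ℕ) :=
  G.biUnion fun a => H.biUnion fun b => vdash a b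

/-- The universal expression ω_u evaluated at a tree name v:
ω_{u_l ∨ u_r}(v) = ω_{u_l}(v) ⊢ v ⊣ ω_{u_r}(v), with ω_{(0)} = 0 and the unit
conventions (0) ⊢ x = x and x ⊣ (0) = x. -/
noncomputable def omega : PB → List ℕ → Finset (List ℕ)
  | .leaf, _ => ∅
  | .node .leaf .leaf, v => {v}
  | .node .leaf (.node r1 r2), v => dashvG {v} (omega (.node r1 r2) v)
  | .node (.node l1 l2) .leaf, v => vdashG (omega (.node l1 l2) v) {v}
  | .node (.node l1 l2) (.node r1 r2), v =>
      dashvG (vdashG (omega (.node l1 l2) v) {v}) (omega (.node r1 r2) v)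

/-- Dendriform multiplication u ⋉ v := ω_u(v). -/
noncomputable def ltimes (u v : List ℕ) : Finset (List ℕ) := omega (treeOf u) v

/-! The grove `ω_t(v)` has a greatest element for the componentwise order. Indeed `a ⊣ b` and
`a ⊢ v` are obtained by grafting from intervals `[x ↗ y, x ↖ y]` of tree names, so their tops are
`a ↖ b` and `(a ↖ v_l) ∨ v_r`; these are monotone in `a` (the first also in `b`), so the top of
`ω_t(v)` is computed by replacing every grove in the recursion by its top. Equal groves have equal
tops. The top of `ω_t(u)` begins with `u`, so `v ⋉ u = v ⋉ w` forces `u = w` when `u` and `w` have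
the same length. The top of `ω_t(v)` determines `t`: its last coordinate equal to `1` comes from
the root of `t` and splits it into the tops for the two subtrees. -/

theorem List.append_cons_inj_of_notMem_right {α : Type*} {a : α} {A B A' B' : List α}
    (h : A ++ a :: B = A' ++ a :: B') (hB : a ∉ B) (hB' : a ∉ B') : A = A' ∧ B = B' := by
  rcases List.append_eq_append_iff.1 h with ⟨_ | ⟨c, as⟩, rfl, hs⟩ | ⟨_ | ⟨c, bs⟩, rfl, hs⟩
  · simp_all
  · simp only [List.cons_append, List.cons.injEq] at hs
    exact absurd (hs.2 ▸ List.mem_append_right as List.mem_cons_self) hB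
  · simp_all
  · simp only [List.cons_append, List.cons.injEq] at hs
    exact absurd (hs.2 ▸ List.mem_append_right bs List.mem_cons_self) hB'

namespace PB

theorem one_le_of_mem_name : ∀ (t : PB), ∀ x ∈ t.name, 1 ≤ x
  | leaf => by simp [name]
  | node l r => by
    intro x hx
    simp only [name, List.mem_append, List.mem_singleton, List.mem_map] at hx
    rcases hx with (hx | rfl) | ⟨y, -, rfl⟩
    · exact one_le_of_mem_name l x hx
    · rfl
    · omega

def graftRight : PB → PB → PB
  | leaf, t => t
  | node l r, t => node l (graftRight r t)

theorem name_graftRight (s t : PB) : (s.graftRight t).name = under s.name t.name := by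
  induction s with
  | leaf => simp [graftRight, under, name]
  | node l r _ ihr =>
    simp only [graftRight, name, ihr, under, List.map_append, List.map_map, List.length_append,
      List.length_map, List.length_singleton, List.append_assoc]
    congr 3
    exact List.map_congr_left fun x _ => by simp only [Function.comp_apply]; omega

end PB

section TreeNames

variable {a b v : List ℕ}

theorem name_treeOf (hv : TreeName v) : (treeOf v).name = v := by
  have hv' : ∃ t : PB, t.name = v := hv
  rw [treeOf, dif_pos hv']
  exact hv'.choose_spec

theorem treeOf_ne_leaf (hv : TreeName v) (hv0 : v ≠ []) : treeOf v ≠ .leaf := fun h =>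
  hv0 (by rw [← name_treeOf hv, h, PB.name])

theorem graft_leftN_rightN (hv : TreeName v) (hv0 : v ≠ []) : graft (leftN v) (rightN v) = v := by
  obtain ⟨l, r, hlr⟩ : ∃ l r, treeOf v = .node l r := by
    cases h : treeOf v with
    | leaf => exact absurd h (treeOf_ne_leaf hv hv0)
    | node l r => exact ⟨l, r, rfl⟩
  conv_rhs => rw [← name_treeOf hv, hlr]
  rw [leftN, rightN, hlr]
  rfl

theorem treeName_graft (ha : TreeName a) (hb : TreeName b) : TreeName (graft a b) := by
  obtain ⟨s, rfl⟩ := ha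
  obtain ⟨t, rfl⟩ := hb
  exact ⟨.node s t, rfl⟩

theorem treeName_under (ha : TreeName a) (hb : TreeName b) : TreeName (under a b) := by
  obtain ⟨s, rfl⟩ := ha
  obtain ⟨t, rfl⟩ := hb
  exact ⟨s.graftRight t, PB.name_graftRight s t⟩

theorem graft_ne_nil (a b : List ℕ) : graft a b ≠ [] := by simp [graft]

theorem length_graft (a b : List ℕ) : (graft a b).length = a.length + b.length + 1 := by
  simp [graft]
  omega

theorem under_nil_left (a : List ℕ) : under [] a = a := by simp [under]

theorem under_nil_right (a : List ℕ) : under a [] = a := by simp [under]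

theorem graft_under (a b c : List ℕ) :
    graft a (under b c) = under (graft a b) c := by
  simp only [graft, under, List.map_append, List.map_map, List.append_assoc, List.length_append,
    List.length_map, List.length_singleton]
  congr 3
  exact List.map_congr_left fun x _ => by simp only [Function.comp_apply]; omega

theorem graft_leftN_under (ha : TreeName a) (ha0 : a ≠ []) (b : List ℕ) :
    graft (leftN a) (under (rightN a) b) = under a b := by
  rw [graft_under, graft_leftN_rightN ha ha0]

end TreeNames

section ComponentwiseOrder

variable {a a' b b' c : List ℕ}

theorem vle_refl (a : List ℕ) : vle a a := List.forall₂_refl a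

theorem vle_trans (h : vle a b) (h' : vle b c) : vle a c := by
  induction h generalizing c with
  | nil => exact h'
  | cons hxy _ ih =>
    cases h' with
    | cons hyz h' => exact .cons (hxy.trans hyz) (ih h')

theorem vle_antisymm (h : vle a b) (h' : vle b a) : a = b := by
  induction h with
  | nil => rfl
  | cons hxy _ ih =>
    cases h' with
    | cons hyx h' => rw [le_antisymm hxy hyx, ih h']

theorem vle_map {f g : ℕ → ℕ} (hfg : ∀ x y, x ≤ y → f x ≤ g y) (h : vle a b) :
    vle (a.map f) (b.map g) :=
  List.rel_map hfg h

theorem vle_under (ha : vle a a') (hb : vle b b') : vle (under a b) (under a' b') := by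
  refine List.rel_append ha (vle_map (fun x y hxy => ?_) hb)
  rw [ha.length_eq]
  omega

theorem vle_graft (ha : vle a a') (hb : vle b b') : vle (graft a b) (graft a' b') := by
  refine List.rel_append (List.rel_append ha (vle_refl [1])) (vle_map (fun x y hxy => ?_) hb)
  rw [ha.length_eq]
  omega

theorem vle_overV_under (a b : List ℕ) : vle (overV a b) (under a b) :=
  List.rel_append (vle_refl a) (vle_map (fun x y hxy => by split_ifs <;> omega) (vle_refl b))

theorem mem_listIcc_iff : ∀ {a b x : List ℕ}, a.length = b.length →
    (x ∈ listIcc a b ↔ vle a x ∧ vle x b)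
  | [], [], x, _ => by simp [listIcc, vle, List.forall₂_nil_left_iff]
  | p :: a, q :: b, x, h => by
    cases x with
    | nil => simp [listIcc, vle]
    | cons y x =>
      have ih := mem_listIcc_iff (a := a) (b := b) (x := x) (by simpa using h)
      simp only [vle] at ih
      simp only [listIcc, vle, Finset.mem_image, Finset.mem_product, Finset.mem_Icc,
        Prod.exists, List.cons.injEq, List.forall₂_cons, existsAndEq, and_true, ih]
      tauto

end ComponentwiseOrder

section Groves

variable {a b v x : List ℕ} {G H : Finset (List ℕ)}

theorem mem_dplus_iff :
    x ∈ dplus a b ↔ TreeName x ∧ vle (overV a b) x ∧ vle x (under a b) := by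
  classical
  rw [dplus, treeIcc, Finset.mem_filter, mem_listIcc_iff (by simp [overV, under, rsh]), and_comm]

theorem under_mem_dplus (ha : TreeName a) (hb : TreeName b) : under a b ∈ dplus a b :=
  mem_dplus_iff.2 ⟨treeName_under ha hb, vle_overV_under a b, vle_refl _⟩

theorem treeName_of_mem_dashv (hx : x ∈ dashv a b) : TreeName x ∧ x ≠ [] := by
  obtain ⟨y, hy, rfl⟩ := Finset.mem_image.1 hx
  exact ⟨treeName_graft ⟨_, rfl⟩ (mem_dplus_iff.1 hy).1, graft_ne_nil _ _⟩

theorem vle_under_of_mem_dashv (ha : TreeName a) (ha0 : a ≠ []) (hx : x ∈ dashv a b) :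
    vle x (under a b) := by
  obtain ⟨y, hy, rfl⟩ := Finset.mem_image.1 hx
  rw [← graft_leftN_under ha ha0]
  exact vle_graft (vle_refl _) (mem_dplus_iff.1 hy).2.2

theorem under_mem_dashv (ha : TreeName a) (ha0 : a ≠ []) (hb : TreeName b) :
    under a b ∈ dashv a b :=
  Finset.mem_image.2 ⟨_, under_mem_dplus ⟨_, rfl⟩ hb, graft_leftN_under ha ha0 b⟩

/-- The greatest element of `a ⊢ v`. -/
noncomputable def vdashTop (a v : List ℕ) : List ℕ := graft (under a (leftN v)) (rightN v)

theorem vdashTop_nil (hv : TreeName v) (hv0 : v ≠ []) : vdashTop [] v = v := by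
  rw [vdashTop, under_nil_left, graft_leftN_rightN hv hv0]

theorem treeName_of_mem_vdash (hx : x ∈ vdash a v) : TreeName x ∧ x ≠ [] := by
  obtain ⟨y, hy, rfl⟩ := Finset.mem_image.1 hx
  exact ⟨treeName_graft (mem_dplus_iff.1 hy).1 ⟨_, rfl⟩, graft_ne_nil _ _⟩

theorem vle_vdashTop_of_mem_vdash (hx : x ∈ vdash a v) : vle x (vdashTop a v) := by
  obtain ⟨y, hy, rfl⟩ := Finset.mem_image.1 hx
  exact vle_graft (mem_dplus_iff.1 hy).2.2 (vle_refl _)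

theorem vdashTop_mem_vdash (ha : TreeName a) : vdashTop a v ∈ vdash a v :=
  Finset.mem_image.2 ⟨_, under_mem_dplus ha ⟨_, rfl⟩, rfl⟩

theorem vle_vdashTop (h : vle a b) (v : List ℕ) : vle (vdashTop a v) (vdashTop b v) :=
  vle_graft (vle_under h (vle_refl _)) (vle_refl _)

theorem mem_dashvG : x ∈ dashvG G H ↔ ∃ a ∈ G, ∃ b ∈ H, x ∈ dashv a b := by
  simp [dashvG]

theorem mem_vdashG : x ∈ vdashG G H ↔ ∃ a ∈ G, ∃ b ∈ H, x ∈ vdash a b := by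
  simp [vdashG]

theorem treeName_of_mem_dashvG (hx : x ∈ dashvG G H) : TreeName x ∧ x ≠ [] := by
  obtain ⟨_, -, _, -, hx⟩ := mem_dashvG.1 hx
  exact treeName_of_mem_dashv hx

theorem treeName_of_mem_vdashG (hx : x ∈ vdashG G H) : TreeName x ∧ x ≠ [] := by
  obtain ⟨_, -, _, -, hx⟩ := mem_vdashG.1 hx
  exact treeName_of_mem_vdash hx

def HasTop (G : Finset (List ℕ)) (m : List ℕ) : Prop := m ∈ G ∧ ∀ x ∈ G, vle x m

theorem HasTop.unique {m m' : List ℕ} (h : HasTop G m) (h' : HasTop G m') : m = m' :=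
  vle_antisymm (h'.2 m h.1) (h.2 m' h'.1)

theorem hasTop_singleton (v : List ℕ) : HasTop {v} v := by
  simp [HasTop, vle_refl]

theorem HasTop.dashvG (hG : HasTop G a) (hH : HasTop H b)
    (hGn : ∀ x ∈ G, TreeName x ∧ x ≠ []) (hb : TreeName b) :
    HasTop (dashvG G H) (under a b) := by
  refine ⟨mem_dashvG.2 ⟨a, hG.1, b, hH.1, ?_⟩, fun x hx => ?_⟩
  · exact under_mem_dashv (hGn a hG.1).1 (hGn a hG.1).2 hb
  · obtain ⟨a', ha', b', hb', hx⟩ := mem_dashvG.1 hx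
    exact vle_trans (vle_under_of_mem_dashv (hGn a' ha').1 (hGn a' ha').2 hx)
      (vle_under (hG.2 a' ha') (hH.2 b' hb'))

theorem HasTop.vdashG_singleton (hG : HasTop G a) (ha : TreeName a) (v : List ℕ) :
    HasTop (vdashG G {v}) (vdashTop a v) := by
  refine ⟨mem_vdashG.2 ⟨a, hG.1, v, Finset.mem_singleton_self v, vdashTop_mem_vdash ha⟩,
    fun x hx => ?_⟩
  obtain ⟨a', ha', v', hv', hx⟩ := mem_vdashG.1 hx
  rw [Finset.mem_singleton.1 hv'] at hx
  exact vle_trans (vle_vdashTop_of_mem_vdash hx) (vle_vdashTop (hG.2 a' ha') v)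

end Groves

section Omega

variable {v : List ℕ}

theorem treeName_of_mem_omega (hv : TreeName v) (hv0 : v ≠ []) :
    ∀ (t : PB) {x : List ℕ}, x ∈ omega t v → TreeName x ∧ x ≠ []
  | .leaf, _, hx => absurd hx (Finset.notMem_empty _)
  | .node .leaf .leaf, _, hx => by rw [Finset.mem_singleton.1 hx]; exact ⟨hv, hv0⟩
  | .node .leaf (.node _ _), _, hx => treeName_of_mem_dashvG hx
  | .node (.node _ _) .leaf, _, hx => treeName_of_mem_vdashG hx
  | .node (.node _ _) (.node _ _), _, hx => treeName_of_mem_dashvG hx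

/-- The greatest element of `ω_t(v)`. When the left subtree is a leaf, the convention
`(0) ⊢ v = v` is absorbed by `vdashTop [] v = v`; when the right subtree is a leaf, the convention
`x ⊣ (0) = x` is absorbed by `under x [] = x`. -/
noncomputable def omegaTop : PB → List ℕ → List ℕ
  | .leaf, _ => []
  | .node l r, v => under (vdashTop (omegaTop l v) v) (omegaTop r v)

theorem omega_hasTop (hv : TreeName v) (hv0 : v ≠ []) :
    ∀ t : PB, t ≠ .leaf → HasTop (omega t v) (omegaTop t v)
  | .leaf, h => absurd rfl h
  | .node .leaf .leaf, _ => by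
    simpa [omega, omegaTop, vdashTop_nil hv hv0, under_nil_right] using hasTop_singleton v
  | .node .leaf (.node r₁ r₂), _ => by
    have hr := omega_hasTop hv hv0 (.node r₁ r₂) PB.noConfusion
    rw [omegaTop, omegaTop, vdashTop_nil hv hv0]
    exact (hasTop_singleton v).dashvG hr (by simp [hv, hv0])
      (treeName_of_mem_omega hv hv0 _ hr.1).1
  | .node (.node l₁ l₂) .leaf, _ => by
    have hl := omega_hasTop hv hv0 (.node l₁ l₂) PB.noConfusion
    rw [omegaTop, omegaTop, under_nil_right]
    exact hl.vdashG_singleton (treeName_of_mem_omega hv hv0 _ hl.1).1 v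
  | .node (.node l₁ l₂) (.node r₁ r₂), _ => by
    have hl := omega_hasTop hv hv0 (.node l₁ l₂) PB.noConfusion
    have hr := omega_hasTop hv hv0 (.node r₁ r₂) PB.noConfusion
    rw [omegaTop]
    exact (hl.vdashG_singleton (treeName_of_mem_omega hv hv0 _ hl.1).1 v).dashvG hr
      (fun _ hx => treeName_of_mem_vdashG hx) (treeName_of_mem_omega hv hv0 _ hr.1).1

theorem prefix_omegaTop (hv : TreeName v) (hv0 : v ≠ []) :
    ∀ t : PB, t ≠ .leaf → v <+: omegaTop t v
  | .leaf, h => absurd rfl h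
  | .node .leaf r, _ => by
    rw [omegaTop, omegaTop, vdashTop_nil hv hv0]
    exact List.prefix_append _ _
  | .node (.node l₁ l₂) r, _ => by
    refine (prefix_omegaTop hv hv0 (.node l₁ l₂) PB.noConfusion).trans ?_
    show _ <+: under (vdashTop (omegaTop (.node l₁ l₂) v) v) (omegaTop r v)
    simp only [under, vdashTop, graft, List.append_assoc]
    exact List.prefix_append _ _

theorem one_le_of_mem_omegaTop : ∀ (t : PB), ∀ x ∈ omegaTop t v, 1 ≤ x
  | .leaf => by simp [omegaTop]
  | .node l r => by
    intro x hx
    simp only [omegaTop, under, vdashTop, graft, rightN, leftN, List.mem_append,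
      List.mem_map, List.mem_singleton] at hx
    rcases hx with (((hx | ⟨y, hy, rfl⟩) | rfl) | ⟨y, -, rfl⟩) | ⟨y, hy, rfl⟩
    · exact one_le_of_mem_omegaTop l x hx
    · exact (PB.one_le_of_mem_name _ _ hy).trans (Nat.le_add_right _ _)
    · rfl
    · omega
    · exact (one_le_of_mem_omegaTop r y hy).trans (Nat.le_add_right _ _)

theorem omegaTop_node (l r : PB) (v : List ℕ) :
    omegaTop (.node l r) v = under (omegaTop l v) (leftN v) ++ 1 ::
      ((rightN v).map (· + (under (omegaTop l v) (leftN v)).length + 1) ++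
        (omegaTop r v).map (· + (vdashTop (omegaTop l v) v).length)) := by
  simp [omegaTop, under, vdashTop, graft]

theorem one_notMem_omegaTop_node_tail (l r : PB) (v : List ℕ) :
    1 ∉ (rightN v).map (· + (under (omegaTop l v) (leftN v)).length + 1) ++
        (omegaTop r v).map (· + (vdashTop (omegaTop l v) v).length) := by
  simp only [List.mem_append, List.mem_map, not_or, not_exists, not_and, vdashTop, length_graft]
  refine ⟨fun x hx => ?_, fun x hx => ?_⟩
  · have := PB.one_le_of_mem_name _ x hx
    omega
  · have := one_le_of_mem_omegaTop r x hx
    omega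

theorem omegaTop_injective (v : List ℕ) : Function.Injective (omegaTop · v) := by
  intro t t' h
  induction t generalizing t' with
  | leaf =>
    cases t' with
    | leaf => rfl
    | node l r => simp [omegaTop, vdashTop, under, graft] at h
  | node l r ihl ihr =>
    cases t' with
    | leaf => simp [omegaTop, vdashTop, under, graft] at h
    | node l' r' =>
      simp only at h
      rw [omegaTop_node, omegaTop_node] at h
      obtain ⟨hA, hB⟩ := List.append_cons_inj_of_notMem_right h
        (one_notMem_omegaTop_node_tail l r v) (one_notMem_omegaTop_node_tail l' r' v)
      have hl : omegaTop l v = omegaTop l' v := by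
        have hlen := congrArg List.length hA
        simp only [under, List.length_append, List.length_map] at hlen
        exact (List.append_inj hA (by omega)).1
      obtain rfl := ihl hl
      obtain rfl := ihr (List.map_injective_iff.2 (add_left_injective _)
        (List.append_inj hB (by simp)).2)
      rfl

theorem omegaTop_eq_of_omega_eq {t t' : PB} {v' : List ℕ} (hv : TreeName v) (hv0 : v ≠ [])
    (hv' : TreeName v') (hv0' : v' ≠ []) (ht : t ≠ .leaf) (ht' : t' ≠ .leaf)
    (h : omega t v = omega t' v') : omegaTop t v = omegaTop t' v' :=
  (omega_hasTop hv hv0 t ht).unique (h ▸ omega_hasTop hv' hv0' t' ht')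

end Omega

/-- Left and right cancellation for the dendriform multiplication ⋉. -/
theorem stmt18 (u v w : List ℕ) (hu : TreeName u) (hv : TreeName v) (hw : TreeName w)
    (hv0 : v ≠ []) (hlen : u.length = w.length) :
    (ltimes v u = ltimes v w → u = w) ∧ (ltimes u v = ltimes w v → u = w) := by
  by_cases hu0 : u = []
  · obtain rfl : w = [] := List.length_eq_zero_iff.1 (by simp [← hlen, hu0])
    simp [hu0]
  have hw0 : w ≠ [] := fun hw0 => hu0 (List.length_eq_zero_iff.1 (by simp [hlen, hw0]))
  constructor
  · intro h
    have ht := treeOf_ne_leaf hv hv0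
    have htop := omegaTop_eq_of_omega_eq hu hu0 hw hw0 ht ht h
    have hpre : u <+: w := List.prefix_of_prefix_length_le
      (htop ▸ prefix_omegaTop hu hu0 _ ht) (prefix_omegaTop hw hw0 _ ht) hlen.le
    exact hpre.eq_of_length hlen
  · intro h
    have htop := omegaTop_eq_of_omega_eq hv hv0 hv hv0
      (treeOf_ne_leaf hu hu0) (treeOf_ne_leaf hw hw0) h
    rw [← name_treeOf hu, ← name_treeOf hw, omegaTop_injective v htop]
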